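/- Let α ∈ (0,2) and f, g ∈ L^α(S, μ). Then for all u, v ∈ ℝ: (i) |U(u,v)| ≤ 2|uv|^{α/2}[f,g]₂; (ii) |U(u,v)| ≤ 2|uv|^{α/2} exp(−(|u|^{α/2}‖f‖_α^{α/2} − |v|^{α/2}‖g‖_α^{α/2})²) [f,g]₂; (iii) |U(u,v)| ≤ 2|uv|^{α/2} exp(−2(‖f‖_α^{α/2}‖g‖_α^{α/2} − [f,g]₂)|uv|^{α/2}) [f,g]₂. (Paper's Lemma 3.1.) -/

import Mathlib

open MeasureTheory Real Set Filter
open scoped ENNReal Topology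

noncomputable def nrm (α : ℝ) {S : Type*} [MeasurableSpace S] (μ : Measure S) (f : S → ℝ) : ℝ :=
  (∫ s, |f s| ^ α ∂μ) ^ (1 / α)

noncomputable def dep2 (α : ℝ) {S : Type*} [MeasurableSpace S] (μ : Measure S) (f g : S → ℝ) : ℝ :=
  ∫ s, |f s * g s| ^ (α / 2) ∂μ

noncomputable def dep1s (α : ℝ) {S : Type*} [MeasurableSpace S] (μ : Measure S) (f g : S → ℝ) : ℝ :=
  ∫ s, |f s| ^ (α - 1) * |g s| ∂μ

noncomputable def dep1 (α : ℝ) {S : Type*} [MeasurableSpace S] (μ : Measure S) (f g : S → ℝ) : ℝ :=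
  dep1s α μ f g + dep1s α μ g f

/-- `f ∈ L^α(S, μ)`. -/
def MemLalpha (α : ℝ) {S : Type*} [MeasurableSpace S] (μ : Measure S) (f : S → ℝ) : Prop :=
  AEStronglyMeasurable f μ ∧ Integrable (fun s => |f s| ^ α) μ

/-- Assumption (A1) with constant ε₁. -/
def A1 (α ε₁ : ℝ) {S : Type*} [MeasurableSpace S] (μ : Measure S) (f g : S → ℝ) : Prop :=
  nrm α μ f ^ (α / 2) * nrm α μ g ^ (α / 2) - dep2 α μ f g
    ≥ ε₁ * (nrm α μ f ^ (α / 2) * nrm α μ g ^ (α / 2))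

/-- Assumption (A2) with constant ε₂. -/
def A2 (α ε₂ : ℝ) {S : Type*} [MeasurableSpace S] (μ : Measure S) (f g : S → ℝ) : Prop :=
  ∀ u v : ℝ, nrm α μ (fun s => u * f s + v * g s) ^ α
    ≥ ε₂ * (|u| ^ α * nrm α μ f ^ α + |v| ^ α * nrm α μ g ^ α)

noncomputable def Ufun (α : ℝ) {S : Type*} [MeasurableSpace S] (μ : Measure S)
    (f g : S → ℝ) (u v : ℝ) : ℝ :=
  Real.exp (-(nrm α μ (fun s => u * f s + v * g s) ^ α)) -
    Real.exp (-(nrm α μ (fun s => u * f s) ^ α) - nrm α μ (fun s => v * g s) ^ α)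

/-- signed power `a^⟨p⟩ = sign(a)|a|^p`. -/
noncomputable def spow (a p : ℝ) : ℝ := Real.sign a * |a| ^ p

noncomputable def D1 (α : ℝ) {S : Type*} [MeasurableSpace S] (μ : Measure S)
    (f g : S → ℝ) (u v : ℝ) : ℝ :=
  -α * (∫ s, spow (u * f s + v * g s) (α - 1) * f s ∂μ) *
      Real.exp (-(nrm α μ (fun s => u * f s + v * g s) ^ α)) +
    α * (∫ s, spow (u * f s) (α - 1) * f s ∂μ) *
      Real.exp (-(nrm α μ (fun s => u * f s) ^ α) - nrm α μ (fun s => v * g s) ^ α)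

noncomputable def D2 (α : ℝ) {S : Type*} [MeasurableSpace S] (μ : Measure S)
    (f g : S → ℝ) (u v : ℝ) : ℝ :=
  -(α * (α - 1)) * (∫ s, (if f s = 0 ∨ g s = 0 then (0:ℝ) else
        |u * f s + v * g s| ^ (α - 2) * (f s * g s)) ∂μ) *
      Real.exp (-(nrm α μ (fun s => u * f s + v * g s) ^ α)) +
    α ^ 2 * (∫ s, spow (u * f s + v * g s) (α - 1) * f s ∂μ) *
      (∫ s, spow (u * f s + v * g s) (α - 1) * g s ∂μ) *
      Real.exp (-(nrm α μ (fun s => u * f s + v * g s) ^ α)) -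
    α ^ 2 * (∫ s, spow (u * f s) (α - 1) * f s ∂μ) *
      (∫ s, spow (v * g s) (α - 1) * g s ∂μ) *
      Real.exp (-(nrm α μ (fun s => u * f s) ^ α) - nrm α μ (fun s => v * g s) ^ α)

/-- `(ξ, η)` is jointly SαS with spectral pair `(f, g)`. -/
def JointSAS (α : ℝ) {S : Type*} [MeasurableSpace S] (μ : Measure S) (f g : S → ℝ)
    {Ω : Type*} [MeasurableSpace Ω] (P : Measure Ω) (ξ η : Ω → ℝ) : Prop :=
  ∀ u v : ℝ, (∫ ω, Complex.exp (Complex.I * ((u * ξ ω + v * η ω : ℝ) : ℂ)) ∂P)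
    = Complex.exp (-((nrm α μ (fun s => u * f s + v * g s) ^ α : ℝ) : ℂ))

/-
Put `x = |a|^(α/2)`, `y = |b|^(α/2)`, `z = |a + b|^(α/2)`. Since `t ↦ t^(α/2)` is subadditive
for `α ≤ 2`, the numbers `x, y, z` satisfy the triangle inequalities, so `(x - y)² ≤ z² ≤ (x + y)²`,
i.e. `||a + b|^α - |a|^α - |b|^α| ≤ 2|ab|^(α/2)`. Integrating this with `a = u f`, `b = v g` gives
`|A - B| ≤ 2|uv|^(α/2) [f,g]₂` for `A = ‖uf + vg‖_α^α` and `B = ‖uf‖_α^α + ‖vg‖_α^α`, while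
`|e^(-A) - e^(-B)| ≤ |A - B| e^(-m)` whenever `m ≤ A, B`. The three bounds are the choices `m = 0`,
`m = (p - q)²` and `m = 2pq - 2|uv|^(α/2) [f,g]₂`, where `p = |u|^(α/2) ‖f‖_α^(α/2)` and
`q = |v|^(α/2) ‖g‖_α^(α/2)`: we have `B = p² + q²`, and `|uv|^(α/2) [f,g]₂ ≤ pq` by Cauchy–Schwarz.
-/

lemma Real.rpow_half_sq {x : ℝ} (hx : 0 ≤ x) (p : ℝ) : (x ^ (p / 2)) ^ 2 = x ^ p := by
  rw [← Real.rpow_mul_natCast hx]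
  norm_num

lemma abs_mul_rpow (a b p : ℝ) : |a * b| ^ p = |a| ^ p * |b| ^ p := by
  rw [abs_mul, Real.mul_rpow (abs_nonneg a) (abs_nonneg b)]

lemma abs_add_rpow_le_abs_rpow_add_abs_rpow {p : ℝ} (hp0 : 0 ≤ p) (hp1 : p ≤ 1) (a b : ℝ) :
    |a + b| ^ p ≤ |a| ^ p + |b| ^ p :=
  (Real.rpow_le_rpow (abs_nonneg _) (abs_add_le a b) hp0).trans
    (Real.rpow_add_le_add_rpow (abs_nonneg a) (abs_nonneg b) hp0 hp1)

lemma abs_abs_add_rpow_sub_le {p : ℝ} (hp0 : 0 < p) (hp2 : p ≤ 2) (a b : ℝ) :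
    |(|a + b| ^ p - |a| ^ p - |b| ^ p)| ≤ 2 * |a * b| ^ (p / 2) := by
  have hq0 : 0 ≤ p / 2 := by positivity
  have hq1 : p / 2 ≤ 1 := by linarith
  set x := |a| ^ (p / 2)
  set y := |b| ^ (p / 2)
  set z := |a + b| ^ (p / 2)
  have hzxy : z ≤ x + y := abs_add_rpow_le_abs_rpow_add_abs_rpow hq0 hq1 a b
  have hxzy : x ≤ z + y := by
    simpa [abs_neg] using abs_add_rpow_le_abs_rpow_add_abs_rpow hq0 hq1 (a + b) (-b)
  have hyzx : y ≤ z + x := by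
    simpa [abs_neg] using abs_add_rpow_le_abs_rpow_add_abs_rpow hq0 hq1 (a + b) (-a)
  have hx : 0 ≤ x := by positivity
  have hy : 0 ≤ y := by positivity
  have hz : 0 ≤ z := by positivity
  rw [← Real.rpow_half_sq (abs_nonneg (a + b)), ← Real.rpow_half_sq (abs_nonneg a),
    ← Real.rpow_half_sq (abs_nonneg b), abs_mul_rpow, abs_le]
  constructor <;> nlinarith

lemma abs_exp_neg_sub_exp_neg_le {a b m : ℝ} (hma : m ≤ a) (hmb : m ≤ b) :
    |exp (-a) - exp (-b)| ≤ |a - b| * exp (-m) := by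
  wlog hab : a ≤ b generalizing a b
  · rw [abs_sub_comm, abs_sub_comm a]
    exact this hmb hma (le_of_not_ge hab)
  have hexp : exp (-b) = exp (-a) * exp (-(b - a)) := by rw [← exp_add]; ring_nf
  calc |exp (-a) - exp (-b)| = exp (-a) * (1 - exp (-(b - a))) := by
        rw [abs_of_nonneg (sub_nonneg.2 (exp_le_exp.2 (by linarith))), hexp]; ring
    _ ≤ exp (-m) * (b - a) :=
        mul_le_mul (exp_le_exp.2 (by linarith)) (by linarith [one_sub_le_exp_neg (b - a)])
          (sub_nonneg.2 (exp_le_one_iff.2 (by linarith))) (exp_pos _).le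
    _ = |a - b| * exp (-m) := by rw [abs_sub_comm, abs_of_nonneg (by linarith)]; ring

section Lalpha

variable {S : Type*} [MeasurableSpace S] {μ : Measure S} {α : ℝ} {f g : S → ℝ}

lemma memLalpha_iff_memLp (hα : 0 < α) : MemLalpha α μ f ↔ MemLp f (ENNReal.ofReal α) μ := by
  refine ⟨fun hf => ?_, fun hf => ⟨hf.1, ?_⟩⟩
  · rw [← integrable_norm_rpow_iff hf.1 (by simpa using hα) ENNReal.ofReal_ne_top,
      ENNReal.toReal_ofReal hα.le]
    simpa only [Real.norm_eq_abs] using hf.2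
  · simpa only [Real.norm_eq_abs, ENNReal.toReal_ofReal hα.le] using
      hf.integrable_norm_rpow (by simpa using hα) ENNReal.ofReal_ne_top

lemma MemLalpha.add (hα : 0 < α) (hf : MemLalpha α μ f) (hg : MemLalpha α μ g) :
    MemLalpha α μ (fun s => f s + g s) :=
  (memLalpha_iff_memLp hα).2 (((memLalpha_iff_memLp hα).1 hf).add ((memLalpha_iff_memLp hα).1 hg))

lemma MemLalpha.const_mul (hα : 0 < α) (hf : MemLalpha α μ f) (c : ℝ) :
    MemLalpha α μ (fun s => c * f s) :=
  (memLalpha_iff_memLp hα).2 (((memLalpha_iff_memLp hα).1 hf).const_mul c)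

lemma MemLalpha.memLp_two_rpow_half (hf : MemLalpha α μ f) :
    MemLp (fun s => |f s| ^ (α / 2)) 2 μ := by
  have hmeas : AEStronglyMeasurable (fun s => |f s| ^ (α / 2)) μ :=
    (hf.1.aemeasurable.abs.pow_const _).aestronglyMeasurable
  rw [memLp_two_iff_integrable_sq hmeas]
  simpa only [Real.rpow_half_sq (abs_nonneg _)] using hf.2

lemma MemLalpha.integrable_abs_mul_rpow (hf : MemLalpha α μ f) (hg : MemLalpha α μ g) :
    Integrable (fun s => |f s * g s| ^ (α / 2)) μ := by
  simp only [abs_mul_rpow]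
  exact hf.memLp_two_rpow_half.integrable_mul hg.memLp_two_rpow_half

lemma nrm_nonneg : 0 ≤ nrm α μ f :=
  Real.rpow_nonneg (integral_nonneg fun _ => Real.rpow_nonneg (abs_nonneg _) _) _

lemma nrm_rpow_eq (r : ℝ) : nrm α μ f ^ r = (∫ s, |f s| ^ α ∂μ) ^ (r / α) := by
  rw [nrm, ← Real.rpow_mul (integral_nonneg fun _ => Real.rpow_nonneg (abs_nonneg _) _)]
  ring_nf

lemma nrm_rpow_self (hα : α ≠ 0) : nrm α μ f ^ α = ∫ s, |f s| ^ α ∂μ := by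
  rw [nrm_rpow_eq, div_self hα, Real.rpow_one]

lemma nrm_const_mul_rpow_self (hα : α ≠ 0) (c : ℝ) :
    nrm α μ (fun s => c * f s) ^ α = |c| ^ α * nrm α μ f ^ α := by
  simp only [nrm_rpow_self hα, abs_mul, Real.mul_rpow (abs_nonneg c) (abs_nonneg _),
    integral_const_mul]

lemma dep2_const_mul (u v : ℝ) :
    dep2 α μ (fun s => u * f s) (fun s => v * g s) = |u * v| ^ (α / 2) * dep2 α μ f g := by
  simp only [dep2, mul_mul_mul_comm u, abs_mul_rpow (u * v), integral_const_mul]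

lemma dep2_le_nrm_rpow_mul_nrm_rpow (hα : 0 < α) (hf : MemLalpha α μ f) (hg : MemLalpha α μ g) :
    dep2 α μ f g ≤ nrm α μ f ^ (α / 2) * nrm α μ g ^ (α / 2) := by
  have hholder := integral_mul_le_Lp_mul_Lq_of_nonneg Real.HolderConjugate.two_two
    (ae_of_all _ fun s => Real.rpow_nonneg (abs_nonneg (f s)) _)
    (ae_of_all _ fun s => Real.rpow_nonneg (abs_nonneg (g s)) _)
    (by simpa using hf.memLp_two_rpow_half) (by simpa using hg.memLp_two_rpow_half)
  have hexp : α / 2 / α = 1 / 2 := by field_simp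
  simpa only [dep2, abs_mul_rpow, ← Real.rpow_mul (abs_nonneg _), div_mul_cancel₀ α two_ne_zero,
    nrm_rpow_eq, hexp] using hholder

lemma abs_nrm_add_rpow_sub_le (hα0 : 0 < α) (hα2 : α ≤ 2) (hf : MemLalpha α μ f)
    (hg : MemLalpha α μ g) :
    |nrm α μ (fun s => f s + g s) ^ α - nrm α μ f ^ α - nrm α μ g ^ α| ≤ 2 * dep2 α μ f g := by
  have hfg : Integrable (fun s => |f s + g s| ^ α) μ := (hf.add hα0 hg).2
  have hfg_f : Integrable (fun s => |f s + g s| ^ α - |f s| ^ α) μ := hfg.sub hf.2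
  have hsplit : ∫ s, |f s + g s| ^ α ∂μ - ∫ s, |f s| ^ α ∂μ - ∫ s, |g s| ^ α ∂μ =
      ∫ s, (|f s + g s| ^ α - |f s| ^ α - |g s| ^ α) ∂μ := by
    rw [integral_sub hfg_f hg.2, integral_sub hfg hf.2]
  rw [nrm_rpow_self hα0.ne', nrm_rpow_self hα0.ne', nrm_rpow_self hα0.ne', hsplit, dep2,
    ← integral_const_mul]
  exact abs_integral_le_integral_abs.trans <| integral_mono (hfg_f.sub hg.2).abs
    ((hf.integrable_abs_mul_rpow hg).const_mul 2) fun s => abs_abs_add_rpow_sub_le hα0 hα2 _ _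

lemma abs_nrm_const_mul_add_rpow_sub_le (hα0 : 0 < α) (hα2 : α ≤ 2) (hf : MemLalpha α μ f)
    (hg : MemLalpha α μ g) (u v : ℝ) :
    |nrm α μ (fun s => u * f s + v * g s) ^ α -
        (nrm α μ (fun s => u * f s) ^ α + nrm α μ (fun s => v * g s) ^ α)| ≤
      2 * (|u * v| ^ (α / 2) * dep2 α μ f g) := by
  rw [← dep2_const_mul, ← sub_sub]
  exact abs_nrm_add_rpow_sub_le hα0 hα2 (hf.const_mul hα0 u) (hg.const_mul hα0 v)

lemma abs_Ufun_le_of_le (hα0 : 0 < α) (hα2 : α ≤ 2) (hf : MemLalpha α μ f)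
    (hg : MemLalpha α μ g) {u v m : ℝ} (hmA : m ≤ nrm α μ (fun s => u * f s + v * g s) ^ α)
    (hmB : m ≤ nrm α μ (fun s => u * f s) ^ α + nrm α μ (fun s => v * g s) ^ α) :
    |Ufun α μ f g u v| ≤ 2 * |u * v| ^ (α / 2) * exp (-m) * dep2 α μ f g := by
  calc |Ufun α μ f g u v|
      = |exp (-nrm α μ (fun s => u * f s + v * g s) ^ α) -
          exp (-(nrm α μ (fun s => u * f s) ^ α + nrm α μ (fun s => v * g s) ^ α))| := by
        rw [Ufun, neg_add']
    _ ≤ _ := abs_exp_neg_sub_exp_neg_le hmA hmB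
    _ ≤ 2 * (|u * v| ^ (α / 2) * dep2 α μ f g) * exp (-m) :=
        mul_le_mul_of_nonneg_right (abs_nrm_const_mul_add_rpow_sub_le hα0 hα2 hf hg u v) (exp_pos _).le
    _ = _ := by ring

end Lalpha

theorem stmt6_general {S : Type*} [MeasurableSpace S] (μ : Measure S)
    (α : ℝ) (hα0 : 0 < α) (hα2 : α < 2) (f g : S → ℝ)
    (hf : MemLalpha α μ f) (hg : MemLalpha α μ g) (u v : ℝ) :
    |Ufun α μ f g u v| ≤ 2 * |u * v| ^ (α / 2) * dep2 α μ f g ∧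
    |Ufun α μ f g u v| ≤ 2 * |u * v| ^ (α / 2) *
      Real.exp (-((|u| ^ (α / 2) * nrm α μ f ^ (α / 2) -
        |v| ^ (α / 2) * nrm α μ g ^ (α / 2)) ^ 2)) * dep2 α μ f g ∧
    |Ufun α μ f g u v| ≤ 2 * |u * v| ^ (α / 2) *
      Real.exp (-(2 * (nrm α μ f ^ (α / 2) * nrm α μ g ^ (α / 2) - dep2 α μ f g) *
        |u * v| ^ (α / 2))) * dep2 α μ f g := by
  have hest := abs_nrm_const_mul_add_rpow_sub_le hα0 hα2.le hf hg u v
  set A := nrm α μ (fun s => u * f s + v * g s) ^ α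
  set t := |u * v| ^ (α / 2)
  set D := dep2 α μ f g
  set p := |u| ^ (α / 2) * nrm α μ f ^ (α / 2)
  set q := |v| ^ (α / 2) * nrm α μ g ^ (α / 2)
  have hB : nrm α μ (fun s => u * f s) ^ α + nrm α μ (fun s => v * g s) ^ α = p ^ 2 + q ^ 2 := by
    simp only [p, q, mul_pow, Real.rpow_half_sq (abs_nonneg _), Real.rpow_half_sq nrm_nonneg,
      nrm_const_mul_rpow_self hα0.ne']
  have hpq : p * q = t * (nrm α μ f ^ (α / 2) * nrm α μ g ^ (α / 2)) := by
    simp only [p, q, t, abs_mul_rpow]; ring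
  have htD : t * D ≤ p * q :=
    hpq ▸ mul_le_mul_of_nonneg_left (dep2_le_nrm_rpow_mul_nrm_rpow hα0 hf hg) (by positivity)
  have hA : p ^ 2 + q ^ 2 - 2 * (t * D) ≤ A := by linarith [(abs_le.1 hest).1]
  have hpq0 : 0 ≤ p * q := mul_nonneg (mul_nonneg (by positivity) (Real.rpow_nonneg nrm_nonneg _))
    (mul_nonneg (by positivity) (Real.rpow_nonneg nrm_nonneg _))
  have htD0 : 0 ≤ t * D := mul_nonneg (by positivity) (integral_nonneg fun _ => by positivity)
  have key : ∀ m, m ≤ A → m ≤ p ^ 2 + q ^ 2 → |Ufun α μ f g u v| ≤ 2 * t * exp (-m) * D :=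
    fun m hmA hmB => abs_Ufun_le_of_le hα0 hα2.le hf hg hmA (hB ▸ hmB)
  refine ⟨?_, ?_, ?_⟩
  · simpa using key 0 (Real.rpow_nonneg nrm_nonneg _) (by positivity)
  · exact key _ (by linarith) (by nlinarith)
  · exact key _ (by nlinarith [sq_nonneg (p - q)]) (by nlinarith [sq_nonneg (p - q)])

/-- Paper's Lemma 3.1. -/
theorem stmt6 {S : Type*} [MeasurableSpace S] (μ : Measure S) [SigmaFinite μ]
    (α : ℝ) (hα0 : 0 < α) (hα2 : α < 2) (f g : S → ℝ)
    (hf : MemLalpha α μ f) (hg : MemLalpha α μ g) (u v : ℝ) :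
    |Ufun α μ f g u v| ≤ 2 * |u * v| ^ (α / 2) * dep2 α μ f g ∧
    |Ufun α μ f g u v| ≤ 2 * |u * v| ^ (α / 2) *
      Real.exp (-((|u| ^ (α / 2) * nrm α μ f ^ (α / 2) -
        |v| ^ (α / 2) * nrm α μ g ^ (α / 2)) ^ 2)) * dep2 α μ f g ∧
    |Ufun α μ f g u v| ≤ 2 * |u * v| ^ (α / 2) *
      Real.exp (-(2 * (nrm α μ f ^ (α / 2) * nrm α μ g ^ (α / 2) - dep2 α μ f g) *
        |u * v| ^ (α / 2))) * dep2 α μ f g :=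
  stmt6_general μ α hα0 hα2 f g hf hg u v
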